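/- arXiv:math-ph/9910034 — 2 statements merged into one kernel-verified Lean document; each statement's English description precedes it below -/
import Mathlib

section
/- Let f : (0,∞) → (0,∞) be measurable and slowly varying. Then for every A > 1 and every δ > 0 there exists T > 0 such that f(t)/f(s) ≤ A · max{(t/s)^δ, (t/s)^{−δ}} for all t, s ≥ T. -/
open Filter Real MeasureTheory Set Topology Pointwise

/-!
Put `g x = log (f (exp x))`; slow variation says `g (x + u) - g x → 0` for each fixed `u`.
By Egorov, along any sequence `xₙ → ∞` this convergence is uniform on a subset of `[0, 2]` of
measure at least `7/4`. Two such subsets, one for `xₙ` and one for `xₙ + uₙ` shifted by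
`uₙ ∈ [0, 1]`, cannot be disjoint inside `[0, 3]`, and a common point bounds `g (xₙ + uₙ) - g xₙ`:
this is the uniform convergence theorem. Chaining unit steps gives
`|g y - g x| ≤ ε (|y - x| + 1)`, and `ε = min (log A) δ` exponentiates to the Potter bound.
-/

theorem exists_subset_Icc_tendstoUniformlyOn {F : ℕ → ℝ → ℝ} {f : ℝ → ℝ}
    (hF : ∀ n, Measurable (F n)) (hf : Measurable f)
    (hlim : ∀ s, Tendsto (F · s) atTop (𝓝 (f s))) (a b : ℝ) {η : ℝ} (hη : 0 < η) :
    ∃ S ⊆ Icc a b, MeasurableSet S ∧ ENNReal.ofReal (b - a - η) ≤ volume S ∧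
      TendstoUniformlyOn F f atTop S := by
  obtain ⟨t, -, ht, hvt, hunif⟩ := tendstoUniformlyOn_of_ae_tendsto
    (fun n ↦ (hF n).stronglyMeasurable) hf.stronglyMeasurable measurableSet_Icc
    measure_Icc_lt_top.ne (ae_of_all volume fun s _ ↦ hlim s) hη
  refine ⟨Icc a b \ t, sdiff_subset, measurableSet_Icc.diff ht, ?_, hunif⟩
  calc ENNReal.ofReal (b - a - η) = ENNReal.ofReal (b - a) - ENNReal.ofReal η :=
        ENNReal.ofReal_sub _ hη.le
    _ ≤ volume (Icc a b) - volume t := by rw [Real.volume_Icc]; gcongr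
    _ ≤ volume (Icc a b \ t) := le_measure_sdiff

theorem exists_mem_sub_mem_of_lt_volume_add {S S' : Set ℝ} {L u : ℝ} (hS : MeasurableSet S)
    (hSL : S ⊆ Icc 0 L) (hS'L : S' ⊆ Icc 0 L) (hu : 0 ≤ u)
    (hvol : ENNReal.ofReal (L + u) < volume S + volume S') :
    ∃ s ∈ S, s - u ∈ S' := by
  have hsub : u +ᵥ S' ⊆ Icc 0 (L + u) := by
    rintro _ ⟨y, hy, rfl⟩
    have := hS'L hy
    simp only [vadd_eq_add, mem_Icc]
    constructor <;> linarith [this.1, this.2]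
  obtain ⟨s, hsS, y, hy, rfl⟩ := nonempty_inter_of_measure_lt_add' volume hS
    (hSL.trans (Icc_subset_Icc le_rfl (by linarith))) hsub
    (by rwa [measure_vadd, Real.volume_Icc, sub_zero])
  exact ⟨_, hsS, by simpa [vadd_eq_add] using hy⟩

theorem exists_large_subset_eventually_abs_add_sub_lt {g : ℝ → ℝ} (hg : Measurable g)
    (h : ∀ u, Tendsto (fun x => g (x + u) - g x) atTop (𝓝 0)) {y : ℕ → ℝ}
    (hy : Tendsto y atTop atTop) {ε : ℝ} (hε : 0 < ε) :
    ∃ S ⊆ Icc (0 : ℝ) 2, MeasurableSet S ∧ ENNReal.ofReal (7 / 4) ≤ volume S ∧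
      ∀ᶠ n in atTop, ∀ s ∈ S, |g (y n + s) - g (y n)| < ε := by
  obtain ⟨S, hS2, hSm, hSv, hunif⟩ := exists_subset_Icc_tendstoUniformlyOn
    (fun n ↦ (hg.comp (measurable_const_add (y n))).sub measurable_const) measurable_const
    (fun s ↦ (h s).comp hy) 0 2 (η := 1 / 4) (by norm_num)
  refine ⟨S, hS2, hSm, by convert hSv using 2; norm_num, ?_⟩
  filter_upwards [Metric.tendstoUniformlyOn_iff.mp hunif ε hε] with n hn s hs
  simpa [Real.dist_eq, abs_sub_comm] using hn s hs

/-- The uniform convergence theorem, in additive form. -/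
theorem exists_forall_abs_add_sub_le {g : ℝ → ℝ} (hg : Measurable g)
    (h : ∀ u, Tendsto (fun x => g (x + u) - g x) atTop (𝓝 0)) {ε : ℝ} (hε : 0 < ε) :
    ∃ X, ∀ x ≥ X, ∀ u ∈ Icc (0 : ℝ) 1, |g (x + u) - g x| ≤ ε := by
  by_contra! hcon
  choose x hx u hu hbad using fun n : ℕ => hcon n
  have hxt : Tendsto x atTop atTop := tendsto_atTop_mono hx tendsto_natCast_atTop_atTop
  have hxut : Tendsto (fun n => x n + u n) atTop atTop :=
    tendsto_atTop_mono (fun n => le_add_of_nonneg_right (hu n).1) hxt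
  obtain ⟨S, hS2, hSm, hSv, hSev⟩ :=
    exists_large_subset_eventually_abs_add_sub_lt hg h hxt (half_pos hε)
  obtain ⟨S', hS'2, -, hS'v, hS'ev⟩ :=
    exists_large_subset_eventually_abs_add_sub_lt hg h hxut (half_pos hε)
  obtain ⟨n, hn, hn'⟩ := (hSev.and hS'ev).exists
  have hvol : ENNReal.ofReal (2 + u n) < volume S + volume S' :=
    calc ENNReal.ofReal (2 + u n) ≤ ENNReal.ofReal 3 := by gcongr; linarith [(hu n).2]
      _ < ENNReal.ofReal (7 / 4) + ENNReal.ofReal (7 / 4) := by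
        rw [← ENNReal.ofReal_add (by norm_num) (by norm_num)]
        exact (ENNReal.ofReal_lt_ofReal_iff (by norm_num)).mpr (by norm_num)
      _ ≤ volume S + volume S' := add_le_add hSv hS'v
  obtain ⟨s, hs, hs'⟩ := exists_mem_sub_mem_of_lt_volume_add hSm hS2 hS'2 (hu n).1 hvol
  have h₁ := hn s hs
  have h₂ := hn' _ hs'
  rw [show x n + u n + (s - u n) = x n + s by ring] at h₂
  refine (hbad n).not_ge ?_
  calc |g (x n + u n) - g (x n)|
      = |(g (x n + s) - g (x n)) - (g (x n + s) - g (x n + u n))| := by congr 1; ring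
    _ ≤ |g (x n + s) - g (x n)| + |g (x n + s) - g (x n + u n)| := abs_sub _ _
    _ ≤ ε := by linarith

theorem abs_sub_le_mul_of_le_add_natCast {g : ℝ → ℝ} {ε X : ℝ}
    (h : ∀ x ≥ X, ∀ u ∈ Icc (0 : ℝ) 1, |g (x + u) - g x| ≤ ε) (n : ℕ) :
    ∀ x ≥ X, ∀ y, x ≤ y → y ≤ x + n → |g y - g x| ≤ ε * n := by
  induction n with
  | zero =>
    intro x _ y hxy hyx
    simp [le_antisymm (by simpa using hyx) hxy]
  | succ n ih =>
    intro x hx y hxy hyx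
    push_cast at hyx ⊢
    have hε : 0 ≤ ε := by simpa using h x hx 0 ⟨le_rfl, zero_le_one⟩
    by_cases hy : y ≤ x + 1
    · have := h x hx (y - x) ⟨by linarith, by linarith⟩
      rw [add_sub_cancel] at this
      nlinarith [n.cast_nonneg (α := ℝ)]
    · calc |g y - g x| = |(g y - g (x + 1)) + (g (x + 1) - g x)| := by rw [sub_add_sub_cancel]
        _ ≤ |g y - g (x + 1)| + |g (x + 1) - g x| := abs_add_le _ _
        _ ≤ ε * n + ε := add_le_add (ih (x + 1) (by linarith) y (by linarith) (by linarith))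
            (h x hx 1 ⟨zero_le_one, le_rfl⟩)
        _ = ε * (n + 1) := by ring

theorem abs_sub_le_mul_abs_sub_add_one {g : ℝ → ℝ} {ε X : ℝ}
    (h : ∀ x ≥ X, ∀ u ∈ Icc (0 : ℝ) 1, |g (x + u) - g x| ≤ ε) {x y : ℝ} (hx : X ≤ x)
    (hy : X ≤ y) : |g y - g x| ≤ ε * (|y - x| + 1) := by
  have hε : 0 ≤ ε := by simpa using h x hx 0 ⟨le_rfl, zero_le_one⟩
  have hn := Nat.ceil_lt_add_one (abs_nonneg (y - x))
  have hle := Nat.le_ceil |y - x|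
  calc |g y - g x| ≤ ε * ⌈|y - x|⌉₊ := by
        rcases le_total x y with hxy | hyx
        · exact abs_sub_le_mul_of_le_add_natCast h _ x hx y hxy
            (by linarith [le_abs_self (y - x)])
        · rw [abs_sub_comm]
          exact abs_sub_le_mul_of_le_add_natCast h _ y hy x hyx
            (by linarith [neg_abs_le (y - x)])
    _ ≤ ε * (|y - x| + 1) := by gcongr

theorem max_rpow_rpow_neg {r : ℝ} (hr : 0 < r) {δ : ℝ} (hδ : 0 ≤ δ) :
    max (r ^ δ) (r ^ (-δ)) = exp (δ * |log r|) := by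
  rw [rpow_def_of_pos hr, rpow_def_of_pos hr, ← exp_monotone.map_max, abs_eq_max_neg,
    mul_max_of_nonneg _ _ hδ]
  ring_nf

theorem tendsto_log_comp_exp_add_sub {f : ℝ → ℝ} (hfpos : ∀ t > 0, 0 < f t)
    (hslow : ∀ c > 0, Tendsto (fun t : ℝ => f (c * t) / f t) atTop (𝓝 1)) (u : ℝ) :
    Tendsto (fun x => log (f (exp (x + u))) - log (f (exp x))) atTop (𝓝 0) := by
  have := ((continuousAt_log one_ne_zero).tendsto.comp
    ((hslow _ (exp_pos u)).comp tendsto_exp_atTop))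
  rw [log_one] at this
  refine this.congr fun x ↦ ?_
  simp only [Function.comp_apply, exp_add, mul_comm (exp x)]
  exact log_div (hfpos _ (by positivity)).ne' (hfpos _ (exp_pos x)).ne'

/-- Potter bounds: if `f` is slowly varying, then for any `A > 1`, `δ > 0` there is `T > 0`
such that `f(t)/f(s) ≤ A max{(t/s)^δ, (t/s)^{-δ}}` for all `t, s ≥ T`. -/
theorem stmt_17
    (f : ℝ → ℝ) (hfpos : ∀ t > 0, 0 < f t) (hfmeas : Measurable f)
    (hslow : ∀ c > 0, Tendsto (fun t : ℝ => f (c * t) / f t) atTop (nhds 1)) :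
    ∀ A > (1 : ℝ), ∀ δ > (0 : ℝ), ∃ T > (0 : ℝ), ∀ t ≥ T, ∀ s ≥ T,
      f t / f s ≤ A * max ((t / s) ^ δ) ((t / s) ^ (-δ)) := by
  intro A hA δ hδ
  set ε := min (log A) δ
  have hg : Measurable fun x ↦ log (f (exp x)) := measurable_log.comp (hfmeas.comp measurable_exp)
  obtain ⟨X, hX⟩ := exists_forall_abs_add_sub_le hg (tendsto_log_comp_exp_add_sub hfpos hslow)
    (lt_min (log_pos hA) hδ)
  refine ⟨exp X, exp_pos X, fun t ht s hs ↦ ?_⟩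
  have ht0 := (exp_pos X).trans_le ht
  have hs0 := (exp_pos X).trans_le hs
  have hlog := abs_sub_le_mul_abs_sub_add_one (g := fun x ↦ log (f (exp x))) hX
    ((le_log_iff_exp_le hs0).mpr hs) ((le_log_iff_exp_le ht0).mpr ht)
  simp only [exp_log ht0, exp_log hs0] at hlog
  have hεδ : ε * |log t - log s| ≤ δ * |log t - log s| := by gcongr; exact min_le_right _ _
  have hεA : ε ≤ log A := min_le_left _ _
  rw [max_rpow_rpow_neg (div_pos ht0 hs0) hδ.le, ← log_le_log_iff (div_pos (hfpos t ht0)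
    (hfpos s hs0)) (by positivity), log_div (hfpos t ht0).ne' (hfpos s hs0).ne',
    log_mul (by positivity) (exp_pos _).ne', log_exp, log_div ht0.ne' hs0.ne']
  linarith [le_abs_self (log (f t) - log (f s))]
end

section
/- Let f : (0,∞) → (0,∞) be measurable and slowly varying, and assume lim_{t→∞} f(t·f(t))/f(t) = 1. Then also lim_{t→∞} f(t/f(t))/f(t) = 1; consequently the pair (f, 1/f) is a de Bruijn conjugate pair, i.e. the function g := 1/f is slowly varying and satisfies lim_{t→∞} f(t)·g(t f(t)) = 1 and lim_{t→∞} g(t)·f(t g(t)) = 1. -/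
/-!
Write `ψ x = log (f (exp x))`. Then `ψ` is measurable with `ψ (x + a) - ψ x → 0` for every `a`, and
the hypothesis on `f (t * f t)` says `ψ (x + ψ x) - ψ x → 0`. By Egorov's theorem the first limit
is uniform in `|a| ≤ 1` (the uniform convergence theorem), so `x ↦ x + ψ x` tends to infinity with
arbitrarily small jumps, and every large `z` is approached from above by some `s + ψ s`. Then
`ψ z ≈ ψ (s + ψ s) ≈ ψ s` and `z - ψ z ≈ s`, whence `ψ (z - ψ z) ≈ ψ s ≈ ψ z`. The conjugacy
limits for `(f, 1 / f)` are reciprocals or rewritings of the hypotheses and of this limit.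
-/

open Filter Real Topology MeasureTheory Set
open scoped ENNReal

theorem TendstoUniformlyOn.tendsto_comp_of_forall_mem {ι α β : Type*} [UniformSpace β]
    {F : ι → α → β} {c : β} {p : Filter ι} {s : Set α}
    (h : TendstoUniformlyOn F (fun _ => c) p s) {g : ι → α} (hg : ∀ i, g i ∈ s) :
    Tendsto (fun i => F i (g i)) p (𝓝 c) :=
  Uniform.tendsto_nhds_right.2 fun u hu => (h u hu).mono fun i hi => hi _ (hg i)

theorem exists_mem_add_mem_Icc_diff {t : Set ℝ} (ht : MeasurableSet t) (hvol : volume t ≤ 1)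
    {u : ℝ} (hu : |u| ≤ 1) : ∃ v ∈ Icc (0 : ℝ) 8 \ t, v + u ∈ Icc (0 : ℝ) 8 \ t := by
  set T := Icc (0 : ℝ) 8 \ t
  have hTvol : 7 ≤ volume T :=
    calc (7 : ℝ≥0∞) = volume (Icc (0 : ℝ) 8) - 1 := by
          rw [Real.volume_Icc]; exact (ENNReal.sub_eq_of_eq_add (by simp) (by norm_num)).symm
      _ ≤ volume (Icc (0 : ℝ) 8) - volume t := tsub_le_tsub_left hvol _
      _ ≤ volume T := le_measure_sdiff
  rw [abs_le] at hu
  obtain ⟨v, hvT, hvuT⟩ := nonempty_inter_of_measure_lt_add volume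
    ((measurableSet_Icc.diff ht).preimage (measurable_add_const u)) (s := T) (u := Icc (-1) 9)
    (fun v hv => ⟨by linarith [hv.1.1], by linarith [hv.1.2]⟩)
    (fun v (hv : v + u ∈ T) => ⟨by linarith [hv.1.1], by linarith [hv.1.2]⟩)
    (calc volume (Icc (-1 : ℝ) 9) < 7 + 7 := by rw [Real.volume_Icc]; norm_num
      _ ≤ _ := by rw [measure_preimage_add_right]; exact add_le_add hTvol hTvol)
  exact ⟨v, hvT, hvuT⟩

theorem abs_sub_le_mul_of_forall_abs_le_one {ψ : ℝ → ℝ} {X ε : ℝ}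
    (h : ∀ x ≥ X, ∀ u, |u| ≤ 1 → |ψ (x + u) - ψ x| ≤ ε) {x : ℝ} (hx : X ≤ x) :
    |ψ x - ψ X| ≤ ε * (x - X + 1) := by
  have hε : 0 ≤ ε := by simpa using h X le_rfl 0 (by simp)
  have hnat : ∀ n : ℕ, |ψ (X + n) - ψ X| ≤ ε * n := by
    intro n
    induction n with
    | zero => simp
    | succ n ih =>
      have step := h (X + n) (by linarith [n.cast_nonneg (α := ℝ)]) 1 (by simp)
      push_cast
      rw [← add_assoc]
      calc |ψ (X + n + 1) - ψ X| ≤ |ψ (X + n + 1) - ψ (X + n)| + |ψ (X + n) - ψ X| :=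
            abs_sub_le _ _ _
        _ ≤ ε + ε * n := add_le_add step ih
        _ = ε * (n + 1) := by ring
  set n := ⌊x - X⌋₊
  have hn : (n : ℝ) ≤ x - X := Nat.floor_le (by linarith)
  have hn' : x - X < n + 1 := Nat.lt_floor_add_one _
  have hlast := h (X + n) (by linarith [n.cast_nonneg (α := ℝ)]) (x - (X + n))
    (abs_le.2 ⟨by linarith, by linarith⟩)
  rw [add_sub_cancel] at hlast
  calc |ψ x - ψ X| ≤ |ψ x - ψ (X + n)| + |ψ (X + n) - ψ X| := abs_sub_le _ _ _
    _ ≤ ε + ε * n := add_le_add hlast (hnat n)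
    _ ≤ ε * (x - X + 1) := by nlinarith

/-- Walk along the grid `X + k * δ` up to the first point where `φ` exceeds `z`. -/
theorem exists_lt_le_add_of_tendsto_atTop {φ : ℝ → ℝ} (hφ : Tendsto φ atTop atTop) {X δ η : ℝ}
    (hδ : 0 < δ) (hstep : ∀ x ≥ X, φ (x + δ) ≤ φ x + η) {z : ℝ} (hz : φ X ≤ z) :
    ∃ s ≥ X, z < φ s ∧ φ s ≤ z + η := by
  have hgrid : Tendsto (fun k : ℕ => X + k * δ) atTop atTop :=
    tendsto_atTop_add_const_left _ _ (tendsto_natCast_atTop_atTop.atTop_mul_const hδ)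
  have hex : ∃ k : ℕ, z < φ (X + k * δ) := ((hφ.comp hgrid).eventually_gt_atTop z).exists
  obtain ⟨j, hj⟩ : ∃ j, Nat.find hex = j + 1 := Nat.exists_eq_succ_of_ne_zero fun h0 => by
    have := Nat.find_spec hex
    rw [h0] at this
    simp only [Nat.cast_zero, zero_mul, add_zero] at this
    linarith
  have hlt := Nat.find_spec hex
  rw [hj] at hlt
  have hle : φ (X + j * δ) ≤ z := not_lt.1 (Nat.find_min hex (by omega))
  have hXj : X ≤ X + j * δ := le_add_of_nonneg_right (by positivity)
  refine ⟨X + (j + 1 : ℕ) * δ, by push_cast; nlinarith, hlt, ?_⟩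
  have := hstep _ hXj
  rw [show X + j * δ + δ = X + (j + 1 : ℕ) * δ by push_cast; ring] at this
  linarith

theorem tendsto_exp_comp_nhds_one_iff {α : Type*} {l : Filter α} {g : α → ℝ} :
    Tendsto (fun a => exp (g a)) l (𝓝 1) ↔ Tendsto g l (𝓝 0) :=
  ⟨fun h => by simpa [Function.comp_def] using (continuousAt_log one_ne_zero).tendsto.comp h,
    fun h => by simpa [Function.comp_def] using (continuous_exp.tendsto 0).comp h⟩

def AddSlowlyVarying (ψ : ℝ → ℝ) : Prop :=
  ∀ a : ℝ, Tendsto (fun x => ψ (x + a) - ψ x) atTop (𝓝 0)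

namespace AddSlowlyVarying

variable {ψ : ℝ → ℝ}

/-- By Egorov, `v ↦ ψ (x n + v) - ψ (x n)` and `v ↦ ψ (x n + u n + v) - ψ (x n + u n)` tend to `0`
uniformly on a subset `T` of `[0, 8]` of measure at least `7`, and a point `v ∈ T` with
`v + u n ∈ T` links `x n` to `x n + u n`. -/
theorem tendsto_sub_of_abs_le_one (hψ : AddSlowlyVarying ψ) (hm : Measurable ψ) {x u : ℕ → ℝ}
    (hx : Tendsto x atTop atTop) (hu : ∀ n, |u n| ≤ 1) :
    Tendsto (fun n => ψ (x n + u n) - ψ (x n)) atTop (𝓝 0) := by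
  set G : ℕ → ℝ → ℝ := fun n v => |ψ (x n + v) - ψ (x n)| + |ψ (x n + u n + v) - ψ (x n + u n)|
  have hxu : Tendsto (fun n => x n + u n) atTop atTop :=
    tendsto_atTop_add_right_of_le _ (-1) hx fun n => (abs_le.1 (hu n)).1
  have hG : ∀ v, Tendsto (fun n => G n v) atTop (𝓝 0) := fun v => by
    simpa using ((hψ v).comp hx).abs.add ((hψ v).comp hxu).abs
  have hGm : ∀ n, StronglyMeasurable (G n) := fun n => by fun_prop
  obtain ⟨t, -, ht, htvol, hunif⟩ := tendstoUniformlyOn_of_ae_tendsto (μ := volume) hGm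
    stronglyMeasurable_const measurableSet_Icc (by simp) (ae_of_all _ fun v _ => hG v) one_pos
  choose v hv hvu using fun n => exists_mem_add_mem_Icc_diff ht (by simpa using htvol) (hu n)
  refine squeeze_zero_norm (fun n => ?_)
    (by simpa using (hunif.tendsto_comp_of_forall_mem hvu).add (hunif.tendsto_comp_of_forall_mem hv))
  have hsplit : ψ (x n + u n) - ψ (x n) =
      (ψ (x n + (v n + u n)) - ψ (x n)) - (ψ (x n + u n + v n) - ψ (x n + u n)) := by
    rw [add_comm (v n), add_assoc]; ring
  rw [Real.norm_eq_abs, hsplit]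
  refine (abs_sub _ _).trans ?_
  simp only [G]
  linarith [abs_nonneg (ψ (x n + u n + (v n + u n)) - ψ (x n + u n)),
    abs_nonneg (ψ (x n + v n) - ψ (x n))]

theorem eventually_abs_sub_le (hψ : AddSlowlyVarying ψ) (hm : Measurable ψ) {ε : ℝ}
    (hε : 0 < ε) : ∀ᶠ x in atTop, ∀ u, |u| ≤ 1 → |ψ (x + u) - ψ x| ≤ ε := by
  by_contra h
  simp only [not_eventually, not_forall, not_le, exists_prop] at h
  choose x hx u hu hlt using fun n : ℕ => frequently_atTop.1 h n
  have hlim := hψ.tendsto_sub_of_abs_le_one hm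
    (tendsto_atTop_mono hx tendsto_natCast_atTop_atTop) hu
  obtain ⟨n, hn⟩ := (hlim.eventually (Metric.ball_mem_nhds 0 hε)).exists
  rw [Real.dist_eq, sub_zero] at hn
  exact (hlt n).not_gt hn

theorem tendsto_add_self_atTop (hψ : AddSlowlyVarying ψ) (hm : Measurable ψ) :
    Tendsto (fun x => x + ψ x) atTop atTop := by
  obtain ⟨X, hX⟩ := eventually_atTop.1 (hψ.eventually_abs_sub_le hm one_half_pos)
  refine tendsto_atTop_mono' atTop ?_
    (tendsto_atTop_add_const_right _ (ψ X + X / 2 - 1 / 2) (tendsto_id.atTop_div_const two_pos))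
  filter_upwards [eventually_ge_atTop X] with x hx
  have := abs_le.1 (abs_sub_le_mul_of_forall_abs_le_one hX hx)
  simp only [id]
  linarith

theorem tendsto_sub_self_of_tendsto_add_self (hψ : AddSlowlyVarying ψ) (hm : Measurable ψ)
    (hfix : Tendsto (fun x => ψ (x + ψ x) - ψ x) atTop (𝓝 0)) :
    Tendsto (fun x => ψ (x - ψ x) - ψ x) atTop (𝓝 0) := by
  refine Metric.tendsto_nhds.2 fun η hη => ?_
  set ε := min (η / 4) (1 / 4)
  have hε : 0 < ε := by positivity
  have hεη : ε ≤ η / 4 := min_le_left _ _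
  have hε1 : ε ≤ 1 / 4 := min_le_right _ _
  have hfixε : ∀ᶠ x in atTop, |ψ (x + ψ x) - ψ x| ≤ ε := by
    simpa using hfix.eventually (Metric.closedBall_mem_nhds 0 hε)
  obtain ⟨X, hX⟩ := eventually_atTop.1 ((hψ.eventually_abs_sub_le hm hε).and hfixε)
  have hU : ∀ x ≥ X, ∀ u, |u| ≤ 1 → |ψ (x + u) - ψ x| ≤ ε := fun x hx => (hX x hx).1
  filter_upwards [eventually_ge_atTop X, eventually_ge_atTop (X + ψ X)] with z hzX hzφ
  obtain ⟨s, hsX, hzs, hsz⟩ := exists_lt_le_add_of_tendsto_atTop (hψ.tendsto_add_self_atTop hm)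
    hε (η := 2 * ε) (fun x hx => by
      linarith [(abs_le.1 (hU x hx ε (abs_le.2 ⟨by linarith, by linarith⟩))).2]) hzφ
  have hz : |ψ (s + ψ s) - ψ z| ≤ ε := by
    simpa using hU z hzX (s + ψ s - z) (abs_le.2 ⟨by linarith, by linarith⟩)
  have hs := abs_le.1 (hX s hsX).2
  rw [abs_le] at hz
  have hzs' : |ψ s - ψ z| ≤ 2 * ε := abs_le.2 ⟨by linarith, by linarith⟩
  have hshift : |ψ (z - ψ z) - ψ s| ≤ ε := by
    simpa using hU s hsX (z - ψ z - s) (abs_le.2 ⟨by linarith, by linarith⟩)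
  rw [Real.dist_eq, sub_zero]
  calc |ψ (z - ψ z) - ψ z| ≤ |ψ (z - ψ z) - ψ s| + |ψ s - ψ z| := abs_sub_le _ _ _
    _ ≤ ε + 2 * ε := add_le_add hshift hzs'
    _ < η := by linarith

end AddSlowlyVarying

theorem tendsto_apply_div_self_div_of_tendsto_apply_mul_self_div {f : ℝ → ℝ}
    (hfpos : ∀ t > 0, 0 < f t) (hfmeas : Measurable f)
    (hslow : ∀ c > 0, Tendsto (fun t => f (c * t) / f t) atTop (𝓝 1))
    (hfix : Tendsto (fun t => f (t * f t) / f t) atTop (𝓝 1)) :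
    Tendsto (fun t => f (t / f t) / f t) atTop (𝓝 1) := by
  set ψ : ℝ → ℝ := fun x => log (f (exp x))
  have hψ : ∀ x, exp (ψ x) = f (exp x) := fun x => exp_log (hfpos _ (exp_pos x))
  have hquot : ∀ x y, f (exp y) / f (exp x) = exp (ψ y - ψ x) := fun x y => by
    rw [exp_sub, hψ, hψ]
  have hmul : ∀ x, exp x * f (exp x) = exp (x + ψ x) := fun x => by rw [exp_add, hψ]
  have hadd : AddSlowlyVarying ψ := fun a => by
    rw [← tendsto_exp_comp_nhds_one_iff]
    refine ((hslow _ (exp_pos a)).comp tendsto_exp_atTop).congr fun x => ?_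
    rw [Function.comp_apply, ← exp_add, add_comm a, hquot]
  have hfix' : Tendsto (fun x => ψ (x + ψ x) - ψ x) atTop (𝓝 0) := by
    rw [← tendsto_exp_comp_nhds_one_iff]
    refine (hfix.comp tendsto_exp_atTop).congr fun x => ?_
    rw [Function.comp_apply, hmul, hquot]
  have hmain := (tendsto_exp_comp_nhds_one_iff.2 (hadd.tendsto_sub_self_of_tendsto_add_self
    (measurable_log.comp (hfmeas.comp measurable_exp)) hfix')).comp tendsto_log_atTop
  refine hmain.congr' ?_
  filter_upwards [eventually_gt_atTop 0] with t ht
  have hdiv : exp (log t - ψ (log t)) = t / f t := by rw [exp_sub, hψ, exp_log ht]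
  rw [Function.comp_apply, ← hquot, hdiv, exp_log ht]

/-- If `f` is slowly varying and `f(t·f(t)) ∼ f(t)`, then `f(t/f(t)) ∼ f(t)`, and
`(f, 1/f)` is a de Bruijn conjugate pair. -/
theorem stmt_18
    (f : ℝ → ℝ) (hfpos : ∀ t > 0, 0 < f t) (hfmeas : Measurable f)
    (hslow : ∀ c > 0, Tendsto (fun t : ℝ => f (c * t) / f t) atTop (nhds 1))
    (hfix : Tendsto (fun t : ℝ => f (t * f t) / f t) atTop (nhds 1)) :
    Tendsto (fun t : ℝ => f (t / f t) / f t) atTop (nhds 1) ∧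
      (∀ c > 0, Tendsto (fun t : ℝ => (f (c * t))⁻¹ / (f t)⁻¹) atTop (nhds 1)) ∧
      Tendsto (fun t : ℝ => f t * (f (t * f t))⁻¹) atTop (nhds 1) ∧
      Tendsto (fun t : ℝ => (f t)⁻¹ * f (t * (f t)⁻¹)) atTop (nhds 1) := by
  have hdiv := tendsto_apply_div_self_div_of_tendsto_apply_mul_self_div hfpos hfmeas hslow hfix
  refine ⟨hdiv, fun c hc => ?_, ?_, ?_⟩
  · simpa [inv_div_inv, div_eq_mul_inv, mul_comm] using (hslow c hc).inv₀ one_ne_zero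
  · simpa [div_eq_mul_inv, mul_comm] using hfix.inv₀ one_ne_zero
  · simpa [div_eq_mul_inv, mul_comm] using hdiv
end
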